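/- arXiv:1805.11078 — 7 statements merged into one kernel-verified Lean document; each statement's English description precedes it below -/
import Mathlib

section
/- Under the MC cost the local objective is exactly aligned with the global objective: for every player i and every unilateral deviation from profile a to profile a' (differing only in i's action), if the deviation strictly decreases player i's MC cost then it strictly decreases the network power, i.e. C_i^MC(a') < C_i^MC(a) implies P^net(a') < P^net(a). -/
/-!
A unilateral deviation of player `i` from parent `a i` to parent `a' i` changes the children
sets of these two nodes only: `i` leaves the first and joins the second. Hence the change in
network power is the power lost at `a i` minus the power gained at `a' i`, and these are exactly
`i`'s marginal contributions at the two profiles. So `P^net` is an exact potential for the MC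
costs, which gives the alignment.
-/

open Finset

variable {Q : Type*} [Fintype Q] [DecidableEq Q]

/-- The set of children of node `j` under action profile `a`
(the players are the nodes different from the source `S`). -/
def children (S : Q) (a : {i : Q // i ≠ S} → Q) (j : Q) :
    Finset {i : Q // i ≠ S} :=
  Finset.univ.filter (fun i => a i = j)

/-- Total power required at node `j` to serve the set `M` of children:
circuitry power plus the largest unicast power, and `0` if `M` is empty. -/
noncomputable def nodePower (S : Q) (pc : Q → ℝ) (p : Q → Q → ℝ) (j : Q)
    (M : Finset {i : Q // i ≠ S}) : ℝ :=
  if h : M.Nonempty then pc j + M.sup' h (fun i => p i.1 j) else 0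

/-- Network power: the sum of the node powers over all nodes. -/
noncomputable def netPower (S : Q) (pc : Q → ℝ) (p : Q → Q → ℝ)
    (a : {i : Q // i ≠ S} → Q) : ℝ :=
  ∑ j, nodePower S pc p j (children S a j)

/-- Marginal-contribution (MC) cost of player `i` at profile `a`. -/
noncomputable def mcCost (S : Q) (pc : Q → ℝ) (p : Q → Q → ℝ)
    (a : {i : Q // i ≠ S} → Q) (i : {i : Q // i ≠ S}) : ℝ :=
  nodePower S pc p (a i) (children S a (a i)) -
    nodePower S pc p (a i) ((children S a (a i)).erase i)

section UnilateralDeviation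

variable {S : Q} {a a' : {i : Q // i ≠ S} → Q} {i : {i : Q // i ≠ S}}

theorem children_eq_erase_of_deviation (hdiff : ∀ m, m ≠ i → a m = a' m) (hmove : a i ≠ a' i) :
    children S a' (a i) = (children S a (a i)).erase i := by
  ext m
  simp only [children, mem_erase, mem_filter, mem_univ, true_and]
  rcases eq_or_ne m i with rfl | hne
  · simp [Ne.symm hmove]
  · simp [hne, hdiff m hne]

theorem children_eq_of_deviation (hdiff : ∀ m, m ≠ i → a m = a' m) {j : Q}
    (hj : j ≠ a i) (hj' : j ≠ a' i) :
    children S a j = children S a' j := by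
  ext m
  simp only [children, mem_filter, mem_univ, true_and]
  rcases eq_or_ne m i with rfl | hne
  · simp [Ne.symm hj, Ne.symm hj']
  · rw [hdiff m hne]

theorem netPower_sub_netPower_eq_mcCost_sub_mcCost (pc : Q → ℝ) (p : Q → Q → ℝ)
    (hdiff : ∀ m, m ≠ i → a m = a' m) :
    netPower S pc p a - netPower S pc p a' = mcCost S pc p a i - mcCost S pc p a' i := by
  by_cases hstay : a i = a' i
  · have hsame : a = a' := funext fun m => (eq_or_ne m i).elim (fun hm => hm ▸ hstay) (hdiff m)
    rw [hsame, sub_self, sub_self]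
  have hsymm : ∀ m, m ≠ i → a' m = a m := fun m hm => (hdiff m hm).symm
  rw [netPower, netPower, ← sum_sub_distrib,
    sum_eq_add_of_mem (a i) (a' i) (mem_univ _) (mem_univ _) hstay
      fun j _ hj => by rw [children_eq_of_deviation hdiff hj.1 hj.2, sub_self],
    mcCost, mcCost, children_eq_erase_of_deviation hdiff hstay,
    children_eq_erase_of_deviation hsymm (Ne.symm hstay)]
  ring

end UnilateralDeviation

theorem mc_aligned_general (S : Q) (pc : Q → ℝ) (p : Q → Q → ℝ)
    (a a' : {i : Q // i ≠ S} → Q)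
    (i : {i : Q // i ≠ S}) (hdiff : ∀ m, m ≠ i → a m = a' m)
    (hlt : mcCost S pc p a' i < mcCost S pc p a i) :
    netPower S pc p a' < netPower S pc p a := by
  linarith [netPower_sub_netPower_eq_mcCost_sub_mcCost pc p hdiff]

/-- Under the MC cost the local objective is exactly aligned with the global
objective: a unilateral deviation that strictly decreases player `i`'s MC cost
strictly decreases the network power. -/
theorem mc_aligned (S : Q) (pc : Q → ℝ) (p : Q → Q → ℝ)
    (hpc : ∀ j, 0 ≤ pc j) (hp : ∀ i j, 0 ≤ p i j)
    (a a' : {i : Q // i ≠ S} → Q)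
    (ha : ∀ m, a m ≠ m.1) (ha' : ∀ m, a' m ≠ m.1)
    (i : {i : Q // i ≠ S}) (hdiff : ∀ m, m ≠ i → a m = a' m)
    (hlt : mcCost S pc p a' i < mcCost S pc p a i) :
    netPower S pc p a' < netPower S pc p a :=
  mc_aligned_general S pc p a a' i hdiff hlt
end

section
/- Every finite instance of the multi-hop broadcast game with the MC cost possesses a pure Nash equilibrium; moreover every sequence of unilateral deviations in which the deviating player strictly decreases its MC cost at each step is finite (best-response dynamics terminates at a Nash equilibrium). -/
open Finset

variable {Q : Type*} [Fintype Q] [DecidableEq Q]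

/-- Profile `a` is a pure Nash equilibrium of the MC game: no player can
strictly decrease its MC cost by unilaterally changing its parent. -/
def IsMCNash (S : Q) (pc : Q → ℝ) (p : Q → Q → ℝ)
    (a : {i : Q // i ≠ S} → Q) : Prop :=
  ∀ (i : {i : Q // i ≠ S}) (b : {i : Q // i ≠ S} → Q),
    (∀ m, b m ≠ m.1) → (∀ m, m ≠ i → b m = a m) →
      ¬ mcCost S pc p b i < mcCost S pc p a i

lemma children_erase_eq (S : Q) (i : {i : Q // i ≠ S}) (a b : {i : Q // i ≠ S} → Q)
    (hab : ∀ m, m ≠ i → b m = a m) (j : Q) :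
    (children S b j).erase i = (children S a j).erase i := by
  ext m
  simp only [Finset.mem_erase, children, Finset.mem_filter, Finset.mem_univ, true_and]
  constructor
  · rintro ⟨hm, h⟩; exact ⟨hm, by rw [← hab m hm]; exact h⟩
  · rintro ⟨hm, h⟩; exact ⟨hm, by rw [hab m hm]; exact h⟩

/-- `netPower` is an exact potential for the MC cost. -/
lemma potential (S : Q) (pc : Q → ℝ) (p : Q → Q → ℝ) (i : {i : Q // i ≠ S})
    (a b : {i : Q // i ≠ S} → Q) (hab : ∀ m, m ≠ i → b m = a m) :
    netPower S pc p b - netPower S pc p a = mcCost S pc p b i - mcCost S pc p a i := by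
  classical
  by_cases hbi : b i = a i
  · have hba : b = a := funext fun m => by
      by_cases hm : m = i
      · subst hm; exact hbi
      · exact hab m hm
    rw [hba]; ring
  · have her := children_erase_eq S i a b hab
    have hia : children S b (a i) = (children S a (a i)).erase i := by
      have hni : i ∉ children S b (a i) := by
        simp only [children, Finset.mem_filter, Finset.mem_univ, true_and]
        exact hbi
      rw [← Finset.erase_eq_of_notMem hni, her]
    have hib : (children S b (b i)).erase i = children S a (b i) := by
      rw [her]
      apply Finset.erase_eq_of_notMem
      simp only [children, Finset.mem_filter, Finset.mem_univ, true_and]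
      exact fun h => hbi h.symm
    have hrest : ∀ j, j ≠ a i → j ≠ b i → children S b j = children S a j := by
      intro j hja hjb
      ext m
      simp only [children, Finset.mem_filter, Finset.mem_univ, true_and]
      constructor
      · intro h
        by_cases hm : m = i
        · subst hm; exact absurd h.symm hjb
        · rw [← hab m hm]; exact h
      · intro h
        by_cases hm : m = i
        · subst hm; exact absurd h.symm hja
        · rw [hab m hm]; exact h
    have hsum : netPower S pc p b - netPower S pc p a
        = ∑ j, (nodePower S pc p j (children S b j) - nodePower S pc p j (children S a j)) := by
      rw [netPower, netPower, ← Finset.sum_sub_distrib]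
    rw [hsum]
    have hzero : ∀ j ∈ Finset.univ, j ∉ ({a i, b i} : Finset Q) →
        nodePower S pc p j (children S b j) - nodePower S pc p j (children S a j) = 0 := by
      intro j _ hj
      simp only [Finset.mem_insert, Finset.mem_singleton, not_or] at hj
      rw [hrest j hj.1 hj.2, sub_self]
    rw [← Finset.sum_subset (Finset.subset_univ ({a i, b i} : Finset Q)) hzero,
      Finset.sum_pair (Ne.symm hbi)]
    simp only [mcCost]
    rw [hia, hib]
    ring

/-- Every finite instance of the MC game possesses a pure Nash equilibrium,
and every sequence of unilateral deviations in which the deviating player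
strictly decreases its MC cost at each step is finite. -/
theorem mc_nash_exists_and_brd_terminates (S : Q) (pc : Q → ℝ) (p : Q → Q → ℝ)
    (hpc : ∀ j, 0 ≤ pc j) (hp : ∀ i j, 0 ≤ p i j) :
    (∃ a : {i : Q // i ≠ S} → Q, (∀ m, a m ≠ m.1) ∧ IsMCNash S pc p a) ∧
    ¬ ∃ f : ℕ → ({i : Q // i ≠ S} → Q),
        (∀ n, ∀ m, f n m ≠ m.1) ∧
        (∀ n, ∃ i, (∀ m, m ≠ i → f (n + 1) m = f n m) ∧
          mcCost S pc p (f (n + 1)) i < mcCost S pc p (f n) i) := by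
  classical
  constructor
  · have hne : (Finset.univ.filter
        (fun a : {i : Q // i ≠ S} → Q => ∀ m, a m ≠ m.1)).Nonempty := by
      refine ⟨fun _ => S, ?_⟩
      simp only [Finset.mem_filter, Finset.mem_univ, true_and]
      exact fun m => Ne.symm m.2
    obtain ⟨a, ha, hmin⟩ := Finset.exists_min_image _ (netPower S pc p) hne
    simp only [Finset.mem_filter, Finset.mem_univ, true_and] at ha
    refine ⟨a, ha, ?_⟩
    intro i b hb hdiff hlt
    have hpot := potential S pc p i a b hdiff
    have hble : netPower S pc p a ≤ netPower S pc p b := by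
      apply hmin
      simp only [Finset.mem_filter, Finset.mem_univ, true_and]
      exact hb
    linarith
  · rintro ⟨f, hf, hstep⟩
    have hdec : ∀ n, netPower S pc p (f (n + 1)) < netPower S pc p (f n) := by
      intro n
      obtain ⟨i, hd, hlt⟩ := hstep n
      have := potential S pc p i (f n) (f (n + 1)) hd
      linarith
    have hanti : StrictAnti (fun n => netPower S pc p (f n)) :=
      strictAnti_nat_of_succ_lt hdec
    have hinj : Function.Injective f := fun m n hmn =>
      hanti.injective (by simp only [hmn])
    obtain ⟨m, n, hne, heq⟩ := Finite.exists_ne_map_eq_of_infinite f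
    exact hne (hinj heq)
end

section
/- Under the MC cost, every action profile that minimizes the network power over all action profiles is a Nash equilibrium of the multi-hop broadcast game; in particular the optimum broadcast tree is always a Nash equilibrium. -/
open Finset

variable {Q : Type*} [Fintype Q] [DecidableEq Q]

lemma netPower_split (S : Q) (pc : Q → ℝ) (p : Q → Q → ℝ)
    (c : {i : Q // i ≠ S} → Q) (i : {i : Q // i ≠ S}) :
    netPower S pc p c =
      (∑ j, nodePower S pc p j ((children S c j).erase i)) + mcCost S pc p c i := by
  have hci : ∀ j, j ≠ c i → (children S c j).erase i = children S c j := by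
    intro j hj
    apply Finset.erase_eq_of_notMem
    simp only [children, Finset.mem_filter, Finset.mem_univ, true_and]
    intro h; exact hj h.symm
  unfold netPower mcCost
  rw [← Finset.sum_erase_add _ _ (Finset.mem_univ (c i)),
      ← Finset.sum_erase_add _ (fun j => nodePower S pc p j ((children S c j).erase i))
        (Finset.mem_univ (c i))]
  have h2 : ∑ j ∈ Finset.univ.erase (c i),
        nodePower S pc p j ((children S c j).erase i)
      = ∑ j ∈ Finset.univ.erase (c i), nodePower S pc p j (children S c j) := by
    refine Finset.sum_congr rfl fun j hj => ?_
    rw [hci j (Finset.ne_of_mem_erase hj)]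
  rw [h2]; ring

/-- Under the MC cost, every action profile that minimizes the network power
over all action profiles is a Nash equilibrium; in particular the optimum
broadcast tree is always a Nash equilibrium. -/
theorem mc_optimum_is_nash (S : Q) (pc : Q → ℝ) (p : Q → Q → ℝ)
    (hpc : ∀ j, 0 ≤ pc j) (hp : ∀ i j, 0 ≤ p i j)
    (a : {i : Q // i ≠ S} → Q) (ha : ∀ m, a m ≠ m.1)
    (hopt : ∀ b : {i : Q // i ≠ S} → Q, (∀ m, b m ≠ m.1) →
      netPower S pc p a ≤ netPower S pc p b) :
    IsMCNash S pc p a := by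
  intro i b hb hbeq hlt
  have herase : ∀ j, (children S b j).erase i = (children S a j).erase i := by
    intro j
    ext m
    simp only [Finset.mem_erase, children, Finset.mem_filter, Finset.mem_univ, true_and]
    constructor
    · rintro ⟨hm, h⟩; exact ⟨hm, by rw [← hbeq m hm]; exact h⟩
    · rintro ⟨hm, h⟩; exact ⟨hm, by rw [hbeq m hm]; exact h⟩
  have h1 := netPower_split S pc p a i
  have h2 := netPower_split S pc p b i
  have h3 : netPower S pc p a ≤ netPower S pc p b := hopt b hb
  rw [h1, h2] at h3
  simp only [herase] at h3
  linarith
end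

section
/- The price of stability of the multi-hop broadcast game with the MC cost is 1: the minimum of the network power over all Nash equilibria equals the minimum of the network power over all action profiles. -/
open Finset

variable {Q : Type*} [Fintype Q] [DecidableEq Q]

/-- `netPower` is an exact potential for the MC cost. -/
lemma netPower_potential (S : Q) (pc : Q → ℝ) (p : Q → Q → ℝ)
    (a b : {i : Q // i ≠ S} → Q) (i : {i : Q // i ≠ S})
    (hi : ∀ m, m ≠ i → b m = a m) :
    netPower S pc p b - netPower S pc p a =
      mcCost S pc p b i - mcCost S pc p a i := by
  by_cases hbi : b i = a i
  · have : b = a := by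
      funext m
      by_cases hm : m = i
      · subst hm; exact hbi
      · exact hi m hm
    subst this; ring
  · have hC : ∀ j, (children S b j).erase i = (children S a j).erase i := by
      intro j
      ext m
      simp only [children, Finset.mem_erase, Finset.mem_filter, Finset.mem_univ,
        true_and]
      constructor
      · rintro ⟨hm, h2⟩; exact ⟨hm, (hi m hm).symm.trans h2⟩
      · rintro ⟨hm, h2⟩; exact ⟨hm, (hi m hm).trans h2⟩
    have hib : i ∈ children S b (b i) := by simp [children]
    have hia : i ∈ children S a (a i) := by simp [children]
    have h1 : children S b (a i) = (children S a (a i)).erase i := by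
      rw [← hC]
      symm
      apply Finset.erase_eq_of_notMem
      simp only [children, Finset.mem_filter, Finset.mem_univ, true_and]
      exact hbi
    have h2 : children S a (b i) = (children S b (b i)).erase i := by
      rw [hC]
      symm
      apply Finset.erase_eq_of_notMem
      simp only [children, Finset.mem_filter, Finset.mem_univ, true_and]
      exact fun h => hbi h.symm
    have h3 : ∀ j, j ≠ a i → j ≠ b i → children S b j = children S a j := by
      intro j hja hjb
      have hbj : i ∉ children S b j := by
        simp only [children, Finset.mem_filter, Finset.mem_univ, true_and]
        exact fun h => hjb h.symm
      have haj : i ∉ children S a j := by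
        simp only [children, Finset.mem_filter, Finset.mem_univ, true_and]
        exact fun h => hja h.symm
      rw [← Finset.erase_eq_of_notMem hbj, ← Finset.erase_eq_of_notMem haj,
        hC]
    unfold netPower
    rw [← Finset.sum_sub_distrib]
    have hsum : ∑ j, (nodePower S pc p j (children S b j) -
        nodePower S pc p j (children S a j)) =
        ∑ j ∈ ({a i, b i} : Finset Q), (nodePower S pc p j (children S b j) -
          nodePower S pc p j (children S a j)) := by
      symm
      apply Finset.sum_subset (Finset.subset_univ _)
      intro j _ hj
      simp only [Finset.mem_insert, Finset.mem_singleton, not_or] at hj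
      rw [h3 j hj.1 hj.2]
      ring
    rw [hsum, Finset.sum_pair (fun h => hbi h.symm)]
    unfold mcCost
    rw [h1, h2]
    ring

/-- The price of stability of the MC game is 1: the minimum of the network
power over all Nash equilibria equals the minimum of the network power over
all action profiles. -/
theorem mc_price_of_stability_one (S : Q) (pc : Q → ℝ) (p : Q → Q → ℝ)
    (hpc : ∀ j, 0 ≤ pc j) (hp : ∀ i j, 0 ≤ p i j) :
    sInf {x : ℝ | ∃ a : {i : Q // i ≠ S} → Q,
        (∀ m, a m ≠ m.1) ∧ IsMCNash S pc p a ∧ netPower S pc p a = x} =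
      sInf {x : ℝ | ∃ a : {i : Q // i ≠ S} → Q,
        (∀ m, a m ≠ m.1) ∧ netPower S pc p a = x} := by
  set A : Set ({i : Q // i ≠ S} → Q) := {a | ∀ m, a m ≠ m.1} with hA
  have hA_ne : A.Nonempty := ⟨fun _ => S, fun m => Ne.symm m.2⟩
  obtain ⟨a0, ha0A, hmin⟩ :=
    Set.exists_min_image A (netPower S pc p) (Set.toFinite A) hA_ne
  have hNash : IsMCNash S pc p a0 := by
    intro i b hb hba hlt
    have hpot := netPower_potential S pc p a0 b i hba
    have hneg : netPower S pc p b - netPower S pc p a0 < 0 := by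
      rw [hpot]; linarith
    have := hmin b hb
    linarith
  set SmallS : Set ℝ := {x : ℝ | ∃ a : {i : Q // i ≠ S} → Q,
      (∀ m, a m ≠ m.1) ∧ IsMCNash S pc p a ∧ netPower S pc p a = x} with hSm
  set BigS : Set ℝ := {x : ℝ | ∃ a : {i : Q // i ≠ S} → Q,
      (∀ m, a m ≠ m.1) ∧ netPower S pc p a = x} with hBg
  have hsub : SmallS ⊆ BigS := by
    rintro x ⟨a, h1, _, h3⟩; exact ⟨a, h1, h3⟩
  have hBigFin : BigS.Finite := by
    have : BigS ⊆ netPower S pc p '' Set.univ := by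
      rintro x ⟨a, _, h3⟩; exact ⟨a, Set.mem_univ a, h3⟩
    exact Set.Finite.subset ((Set.finite_univ).image _) this
  have hSmallFin : SmallS.Finite := hBigFin.subset hsub
  have hSmall_ne : SmallS.Nonempty := ⟨netPower S pc p a0, a0, ha0A, hNash, rfl⟩
  apply le_antisymm
  · -- sInf Small ≤ sInf Big
    have h1 : sInf SmallS ≤ netPower S pc p a0 :=
      csInf_le hSmallFin.bddBelow ⟨a0, ha0A, hNash, rfl⟩
    have h2 : netPower S pc p a0 ≤ sInf BigS := by
      apply le_csInf (hSmall_ne.mono hsub)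
      rintro x ⟨a, ha, rfl⟩
      exact hmin a ha
    linarith
  · exact csInf_le_csInf hBigFin.bddBelow hSmall_ne hsub
end

section
/- There exists a finite instance of the multi-hop broadcast game (a finite node set with circuitry powers and unicast powers) and an action profile a that minimizes the network power over all action profiles, such that a is not a Nash equilibrium when players' costs are given by the equal-share scheme: some player has a unilateral deviation that strictly decreases its equal-share cost while strictly increasing the network power. -/
open Finset

variable {Q : Type*} [Fintype Q] [DecidableEq Q]

/-- Equal-share (ES) cost of player `i` at profile `a`: the power of its parent
divided by the number of children of that parent. -/
noncomputable def esCost (S : Q) (pc : Q → ℝ) (p : Q → Q → ℝ)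
    (a : {i : Q // i ≠ S} → Q) (i : {i : Q // i ≠ S}) : ℝ :=
  nodePower S pc p (a i) (children S a (a i)) /
    ((children S a (a i)).card : ℝ)

section Aux
open Finset

def myi1 : {i : Fin 3 // i ≠ 0} := ⟨1, by decide⟩
def myi2 : {i : Fin 3 // i ≠ 0} := ⟨2, by decide⟩

noncomputable def mypc : Fin 3 → ℝ := fun j => if j = 1 then 0 else 10
noncomputable def myp : Fin 3 → Fin 3 → ℝ := fun _ _ => 1

lemma my_univ : (univ : Finset {i : Fin 3 // i ≠ 0}) = {myi1, myi2} := by decide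

lemma my_children (b : {i : Fin 3 // i ≠ 0} → Fin 3) (j : Fin 3) :
    children 0 b j = ({myi1, myi2} : Finset _).filter (fun i => b i = j) := by
  rw [children, my_univ]

lemma my_np (j : Fin 3) (M : Finset {i : Fin 3 // i ≠ 0}) (h : M.Nonempty) :
    nodePower 0 mypc myp j M = mypc j + 1 := by
  rw [nodePower, dif_pos h]
  simp [myp]

lemma my_np_empty (j : Fin 3) :
    nodePower 0 mypc myp j (∅ : Finset {i : Fin 3 // i ≠ 0}) = 0 := by
  simp [nodePower]

lemma my_net (b : {i : Fin 3 // i ≠ 0} → Fin 3) :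
    netPower 0 mypc myp b =
      nodePower 0 mypc myp 0 (children 0 b 0) +
      nodePower 0 mypc myp 1 (children 0 b 1) +
      nodePower 0 mypc myp 2 (children 0 b 2) := by
  rw [netPower, Fin.sum_univ_three]

end Aux

/-- There is a finite instance of the multi-hop broadcast game and a profile
minimizing the network power which is not a Nash equilibrium for the
equal-share scheme: some player has a unilateral deviation that strictly
decreases its ES cost while strictly increasing the network power. -/
theorem es_optimum_not_nash :
    ∃ (n : ℕ) (S : Fin n) (pc : Fin n → ℝ) (p : Fin n → Fin n → ℝ)
      (a : {i : Fin n // i ≠ S} → Fin n),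
      (∀ j, 0 ≤ pc j) ∧ (∀ i j, 0 ≤ p i j) ∧
      (∀ m, a m ≠ m.1) ∧
      (∀ b : {i : Fin n // i ≠ S} → Fin n, (∀ m, b m ≠ m.1) →
        netPower S pc p a ≤ netPower S pc p b) ∧
      ∃ (i : {i : Fin n // i ≠ S}) (a' : {i : Fin n // i ≠ S} → Fin n),
        (∀ m, a' m ≠ m.1) ∧ (∀ m, m ≠ i → a' m = a m) ∧
        esCost S pc p a' i < esCost S pc p a i ∧
        netPower S pc p a' > netPower S pc p a := by
  classical
  refine ⟨3, 0, mypc, myp, fun _ => 0, ?_, ?_, ?_, ?_, ?_⟩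
  · intro j; unfold mypc; split <;> norm_num
  · intro i j; unfold myp; norm_num
  · intro m; exact fun h => m.2 h.symm
  · intro b hb
    have hca0 : children 0 (fun _ => (0:Fin 3)) 0 = {myi1, myi2} := by
      rw [my_children]; decide
    have hca1 : children 0 (fun _ => (0:Fin 3)) 1 = ∅ := by
      rw [my_children]; decide
    have hca2 : children 0 (fun _ => (0:Fin 3)) 2 = ∅ := by
      rw [my_children]; decide
    have hnea : netPower 0 mypc myp (fun _ => (0:Fin 3)) = 11 := by
      rw [my_net, hca0, hca1, hca2, my_np 0 {myi1, myi2} (Finset.insert_nonempty _ _), my_np_empty, my_np_empty]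
      norm_num [mypc, Fin.ext_iff]
    rw [hnea]
    have h3 : ∀ x : Fin 3, x = 0 ∨ x = 1 ∨ x = 2 := by decide
    have h1 : b myi1 = 0 ∨ b myi1 = 2 := by
      rcases h3 (b myi1) with h | h | h
      · exact Or.inl h
      · exact absurd h (hb myi1)
      · exact Or.inr h
    have h2 : b myi2 = 0 ∨ b myi2 = 1 := by
      rcases h3 (b myi2) with h | h | h
      · exact Or.inl h
      · exact Or.inr h
      · exact absurd h (hb myi2)
    rcases h1 with h1 | h1 <;> rcases h2 with h2 | h2
    · have c0 : children 0 b 0 = {myi1, myi2} := by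
        rw [my_children, Finset.filter_insert, Finset.filter_singleton]; simp [h1, h2]
      have c1 : children 0 b 1 = ∅ := by
        rw [my_children, Finset.filter_insert, Finset.filter_singleton]; simp [h1, h2]
      have c2 : children 0 b 2 = ∅ := by
        rw [my_children, Finset.filter_insert, Finset.filter_singleton]; simp [h1, h2]
      rw [my_net, c0, c1, c2, my_np 0 {myi1, myi2} (Finset.insert_nonempty _ _), my_np_empty, my_np_empty]
      norm_num [mypc, Fin.ext_iff]
    · have c0 : children 0 b 0 = {myi1} := by
        rw [my_children, Finset.filter_insert, Finset.filter_singleton]; simp [h1, h2]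
      have c1 : children 0 b 1 = {myi2} := by
        rw [my_children, Finset.filter_insert, Finset.filter_singleton]; simp [h1, h2]
      have c2 : children 0 b 2 = ∅ := by
        rw [my_children, Finset.filter_insert, Finset.filter_singleton]; simp [h1, h2]
      rw [my_net, c0, c1, c2, my_np 0 {myi1} (Finset.singleton_nonempty _), my_np 1 {myi2} (Finset.singleton_nonempty _),
        my_np_empty]
      norm_num [mypc, Fin.ext_iff]
    · have c0 : children 0 b 0 = {myi2} := by
        rw [my_children, Finset.filter_insert, Finset.filter_singleton]; simp [h1, h2]
      have c1 : children 0 b 1 = ∅ := by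
        rw [my_children, Finset.filter_insert, Finset.filter_singleton]; simp [h1, h2]
      have c2 : children 0 b 2 = {myi1} := by
        rw [my_children, Finset.filter_insert, Finset.filter_singleton]; simp [h1, h2]
      rw [my_net, c0, c1, c2, my_np 0 {myi2} (Finset.singleton_nonempty _), my_np 2 {myi1} (Finset.singleton_nonempty _),
        my_np_empty]
      norm_num [mypc, Fin.ext_iff]
    · have c0 : children 0 b 0 = ∅ := by
        rw [my_children, Finset.filter_insert, Finset.filter_singleton]; simp [h1, h2]
      have c1 : children 0 b 1 = {myi2} := by
        rw [my_children, Finset.filter_insert, Finset.filter_singleton]; simp [h1, h2]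
      have c2 : children 0 b 2 = {myi1} := by
        rw [my_children, Finset.filter_insert, Finset.filter_singleton]; simp [h1, h2]
      rw [my_net, c0, c1, c2, my_np 1 {myi2} (Finset.singleton_nonempty _), my_np 2 {myi1} (Finset.singleton_nonempty _),
        my_np_empty]
      norm_num [mypc, Fin.ext_iff]
  · refine ⟨myi2, fun m => if m = myi2 then 1 else 0, ?_, ?_, ?_, ?_⟩
    · intro m
      by_cases h : m = myi2
      · subst h; decide
      · simp only [if_neg h]; exact fun hh => m.2 hh.symm
    · intro m hm; simp [hm]
    · have hc1 : children 0 (fun m => if m = myi2 then (1:Fin 3) else 0) 1 = {myi2} := by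
        rw [my_children]; decide
      have hc0 : children 0 (fun _ => (0:Fin 3)) 0 = {myi1, myi2} := by
        rw [my_children]; decide
      rw [esCost, esCost]
      rw [if_pos rfl]
      rw [hc1, hc0, my_np 1 {myi2} (Finset.singleton_nonempty _),
        my_np 0 {myi1, myi2} (Finset.insert_nonempty _ _),
        show ({myi2} : Finset {i : Fin 3 // i ≠ 0}).card = 1 from by decide,
        show ({myi1, myi2} : Finset {i : Fin 3 // i ≠ 0}).card = 2 from by decide]
      norm_num [mypc, Fin.ext_iff]
    · have hc0 : children 0 (fun m => if m = myi2 then (1:Fin 3) else 0) 0 = {myi1} := by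
        rw [my_children]; decide
      have hc1 : children 0 (fun m => if m = myi2 then (1:Fin 3) else 0) 1 = {myi2} := by
        rw [my_children]; decide
      have hc2 : children 0 (fun m => if m = myi2 then (1:Fin 3) else 0) 2 = ∅ := by
        rw [my_children]; decide
      have hca0 : children 0 (fun _ => (0:Fin 3)) 0 = {myi1, myi2} := by
        rw [my_children]; decide
      have hca1 : children 0 (fun _ => (0:Fin 3)) 1 = ∅ := by
        rw [my_children]; decide
      have hca2 : children 0 (fun _ => (0:Fin 3)) 2 = ∅ := by
        rw [my_children]; decide
      rw [gt_iff_lt, my_net, my_net, hc0, hc1, hc2, hca0, hca1, hca2,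
        my_np 0 {myi1} (Finset.singleton_nonempty _),
        my_np 0 {myi1, myi2} (Finset.insert_nonempty _ _),
        my_np 1 {myi2} (Finset.singleton_nonempty _), my_np_empty, my_np_empty]
      norm_num [mypc, Fin.ext_iff]
end

section
/- There exists a finite instance of the multi-hop broadcast game (a finite node set with circuitry powers and unicast powers) and an action profile a that minimizes the network power over all action profiles, such that a is not a Nash equilibrium when players' costs are given by the Shapley-value scheme: some player has a unilateral deviation that strictly decreases its Shapley-value cost while strictly increasing the network power. -/
/-!
Take three nodes: the source `0` with circuitry power `4`, and players `1`, `2` without circuitry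
power; player `1` reaches `0` for free and `2` only at unicast power `4`, while player `2` reaches
`0` at unicast power `1` and `1` at unicast power `3/2`. The four admissible profiles have network
power `5`, `11/2`, `9` and `11/2`, the minimum `5` being attained when both players attach to the
source. There the Shapley value charges player `2` half of the source's circuitry power plus its
own extra unicast power, `4/2 + 1 = 3`; by moving to node `1`, whose circuitry power is `0`, it pays
only `3/2`, while the network power rises to `11/2`.
-/

open Finset

variable {Q : Type*} [Fintype Q] [DecidableEq Q]

/-- Shapley-value (SV) cost of player `i` at profile `a`: with
`0 = x_0 ≤ x_1 ≤ … ≤ x_m` the sorted circuitry-inclusive unicast powers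
(`x_i = p^c_j + p_{i,j}`) of the `m` children of `i`'s parent `j`, the SV cost
of the `r`-th child is `∑_{n=1}^{r} (x_n − x_{n−1})/(m + 1 − n)`. -/
noncomputable def svCost (S : Q) (pc : Q → ℝ) (p : Q → Q → ℝ)
    (a : {i : Q // i ≠ S} → Q) (i : {i : Q // i ≠ S}) : ℝ :=
  let j := a i
  let M := children S a j
  let w : {i : Q // i ≠ S} → ℝ := fun h => pc j + p h.1 j
  let l : List ℝ := (M.val.map w).sort (· ≤ ·)
  let x : ℕ → ℝ := fun n => if n = 0 then 0 else l.getD (n - 1) 0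
  let r : ℕ := (M.filter (fun h => w h < w i)).card + 1
  ∑ n ∈ Finset.Icc 1 r, (x n - x (n - 1)) / ((M.card : ℝ) + 1 - n)

section PowerLemmas

variable {S : Q} {pc : Q → ℝ} {p : Q → Q → ℝ} {j : Q}

omit [Fintype Q] [DecidableEq Q] in
@[simp]
lemma nodePower_empty : nodePower S pc p j ∅ = 0 := by
  simp [nodePower]

omit [Fintype Q] [DecidableEq Q] in
@[simp]
lemma nodePower_singleton (i : {i : Q // i ≠ S}) :
    nodePower S pc p j {i} = pc j + p i j := by
  simp [nodePower]

omit [Fintype Q] in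
@[simp]
lemma nodePower_pair (i k : {i : Q // i ≠ S}) :
    nodePower S pc p j {i, k} = pc j + max (p i j) (p k j) := by
  simp [nodePower, Finset.sup'_insert]

end PowerLemmas

section ShapleyLemmas

variable {S : Q} {pc : Q → ℝ} {p : Q → Q → ℝ} {a : {i : Q // i ≠ S} → Q}
  {i k : {i : Q // i ≠ S}}

lemma svCost_of_children_eq_singleton (hM : children S a (a i) = {i}) :
    svCost S pc p a i = pc (a i) + p i (a i) := by
  simp [svCost, hM, Finset.filter_singleton]

lemma svCost_of_children_eq_pair (hM : children S a (a i) = {k, i})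
    (hlt : p k (a i) < p i (a i)) :
    svCost S pc p a i = pc (a i) + p i (a i) - (pc (a i) + p k (a i)) / 2 := by
  have hki : k ≠ i := by rintro rfl; exact hlt.false
  have hval : ({k, i} : Finset {i : Q // i ≠ S}).val = k ::ₘ {i} :=
    Finset.insert_val_of_notMem (by simpa using hki)
  have hsort : Multiset.sort ((pc (a i) + p k (a i)) ::ₘ {pc (a i) + p i (a i)}) (· ≤ ·) =
      [pc (a i) + p k (a i), pc (a i) + p i (a i)] := by
    rw [Multiset.sort_cons _ _ _ (by simpa using hlt.le), Multiset.sort_singleton]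
  have hfilter : ({k, i} : Finset _).filter
      (fun h : {i : Q // i ≠ S} => pc (a i) + p h (a i) < pc (a i) + p i (a i)) = {k} := by
    simp [Finset.filter_insert, Finset.filter_singleton, hlt]
  simp only [svCost, hM, hval, Multiset.map_cons, Multiset.map_singleton, hsort, hfilter]
  rw [Finset.card_pair hki, Finset.card_singleton, show Finset.Icc 1 (1 + 1) = {1, 2} from rfl,
    Finset.sum_pair (by norm_num)]
  norm_num
  ring

end ShapleyLemmas

namespace SvCounterexample

def pc : Fin 3 → ℝ := ![4, 0, 0]

noncomputable def p : Fin 3 → Fin 3 → ℝ := ![![0, 0, 0], ![0, 0, 4], ![1, 3 / 2, 0]]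

abbrev Player := {i : Fin 3 // i ≠ 0}

def i₁ : Player := ⟨1, by decide⟩

def i₂ : Player := ⟨2, by decide⟩

def profile (u v : Fin 3) : Player → Fin 3 := fun m => ![0, u, v] m.1

@[simp] lemma coe_i₁ : (i₁ : Fin 3) = 1 := rfl

@[simp] lemma coe_i₂ : (i₂ : Fin 3) = 2 := rfl

@[simp] lemma profile_i₁ (u v : Fin 3) : profile u v i₁ = u := rfl

@[simp] lemma profile_i₂ (u v : Fin 3) : profile u v i₂ = v := rfl

lemma pc_nonneg (j : Fin 3) : 0 ≤ pc j := by
  fin_cases j <;> norm_num [pc]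

lemma p_nonneg (i j : Fin 3) : 0 ≤ p i j := by
  fin_cases i <;> fin_cases j <;> norm_num [p]

lemma eq_profile (b : Player → Fin 3) : b = profile (b i₁) (b i₂) := by
  funext m
  obtain rfl | rfl : m = i₁ ∨ m = i₂ := by revert m; decide
  all_goals rfl

lemma children_profile (u v j : Fin 3) : children 0 (profile u v) j =
    (if u = j then {i₁} else ∅) ∪ (if v = j then {i₂} else ∅) := by
  revert u v j; decide

lemma netPower_profile_zero_zero : netPower 0 pc p (profile 0 0) = 5 := by
  simp [netPower, Fin.sum_univ_three, children_profile, pc, p]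
  norm_num

lemma netPower_profile_zero_one : netPower 0 pc p (profile 0 1) = 11 / 2 := by
  simp [netPower, Fin.sum_univ_three, children_profile, pc, p]
  norm_num

lemma netPower_profile_zero_zero_le (b : Player → Fin 3) (hb : ∀ m, b m ≠ m.1) :
    netPower 0 pc p (profile 0 0) ≤ netPower 0 pc p b := by
  have h₁ : b i₁ ≠ 1 := hb i₁
  have h₂ : b i₂ ≠ 2 := hb i₂
  rw [eq_profile b, netPower_profile_zero_zero]
  generalize b i₁ = u at h₁ ⊢
  generalize b i₂ = v at h₂ ⊢
  fin_cases u <;> fin_cases v <;>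
    simp_all [netPower, Fin.sum_univ_three, children_profile, pc, p] <;> norm_num

lemma svCost_profile_zero_zero : svCost 0 pc p (profile 0 0) i₂ = 3 := by
  rw [svCost_of_children_eq_pair (k := i₁) (by decide) (by norm_num [p, Matrix.cons_val_two])]
  norm_num [pc, p, Matrix.cons_val_two]

lemma svCost_profile_zero_one : svCost 0 pc p (profile 0 1) i₂ = 3 / 2 := by
  rw [svCost_of_children_eq_singleton (by decide)]
  norm_num [pc, p, Matrix.cons_val_two]

end SvCounterexample

open SvCounterexample in
/-- There is a finite instance of the multi-hop broadcast game and a profile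
minimizing the network power which is not a Nash equilibrium for the
Shapley-value scheme: some player has a unilateral deviation that strictly
decreases its SV cost while strictly increasing the network power. -/
theorem sv_optimum_not_nash :
    ∃ (n : ℕ) (S : Fin n) (pc : Fin n → ℝ) (p : Fin n → Fin n → ℝ)
      (a : {i : Fin n // i ≠ S} → Fin n),
      (∀ j, 0 ≤ pc j) ∧ (∀ i j, 0 ≤ p i j) ∧
      (∀ m, a m ≠ m.1) ∧
      (∀ b : {i : Fin n // i ≠ S} → Fin n, (∀ m, b m ≠ m.1) →
        netPower S pc p a ≤ netPower S pc p b) ∧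
      ∃ (i : {i : Fin n // i ≠ S}) (a' : {i : Fin n // i ≠ S} → Fin n),
        (∀ m, a' m ≠ m.1) ∧ (∀ m, m ≠ i → a' m = a m) ∧
        svCost S pc p a' i < svCost S pc p a i ∧
        netPower S pc p a' > netPower S pc p a := by
  refine ⟨3, 0, pc, p, profile 0 0, pc_nonneg, p_nonneg, by decide, netPower_profile_zero_zero_le,
    i₂, profile 0 1, by decide, by decide, ?_, ?_⟩
  · rw [svCost_profile_zero_zero, svCost_profile_zero_one]
    norm_num
  · rw [netPower_profile_zero_zero, netPower_profile_zero_one]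
    norm_num
end

section
/- Under the equal-share cost, best-response dynamics can cycle: there exists a finite instance of the multi-hop broadcast game, two distinct players i and v, and two action profiles a and a' with a' obtained from a by a unilateral deviation of player i that strictly decreases C_i^ES, and a obtained from a' by a unilateral deviation of player v that strictly decreases C_v^ES; hence the sequence of strict improvement steps never terminates. -/
open Finset

variable {Q : Type*} [Fintype Q] [DecidableEq Q]

/-! Two players choose between the relays `1` and `2`, both attached to the source `0`. Player `3`
needs unicast power `1` and player `4` power `3`, and circuitry is free. Alone at a relay they pay
`1` and `3`; together each pays `3/2`. So `3` always gains by leaving `4`, while `4` always gains by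
joining `3`: a matching-pennies pattern, whose four profiles form a cycle of strict improvements. -/

section

variable {Q : Type*} [Fintype Q] [DecidableEq Q]

theorem mem_children_self (S : Q) (a : {i : Q // i ≠ S} → Q) (i : {i : Q // i ≠ S}) :
    i ∈ children S a (a i) := by
  simp [children]

theorem esCost_eq_of_children_eq (S : Q) (pc : Q → ℝ) (p : Q → Q → ℝ) (a : {i : Q // i ≠ S} → Q)
    (i : {i : Q // i ≠ S}) {M : Finset {i : Q // i ≠ S}} (hM : children S a (a i) = M) :
    esCost S pc p a i =
      (pc (a i) + M.sup' ⟨i, hM ▸ mem_children_self S a i⟩ (fun m => p m.1 (a i))) / M.card := by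
  subst hM
  rw [esCost, nodePower, dif_pos ⟨i, mem_children_self S a i⟩]

def IsImprovingMove (S : Q) (pc : Q → ℝ) (p : Q → Q → ℝ) (a b : {i : Q // i ≠ S} → Q)
    (w : {i : Q // i ≠ S}) : Prop :=
  (∀ m, m ≠ w → b m = a m) ∧ esCost S pc p b w < esCost S pc p a w

end

namespace CyclingExample

abbrev Player := {m : Fin 5 // m ≠ 0}

def loner : Player := ⟨3, by decide⟩

def follower : Player := ⟨4, by decide⟩

theorem loner_ne_follower : loner ≠ follower := by decide

def relay (b : Bool) : Fin 5 := if b then 1 else 2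

def profile (b c : Bool) (m : Player) : Fin 5 :=
  if m.1 = 3 then relay b else if m.1 = 4 then relay c else 0

noncomputable def power (m _ : Fin 5) : ℝ :=
  if m = 3 then 1 else if m = 4 then 3 else 0

theorem power_nonneg (m j : Fin 5) : 0 ≤ power m j := by
  unfold power
  split_ifs <;> norm_num

theorem profile_ne_self (b c : Bool) (m : Player) : profile b c m ≠ m.1 := by
  revert m
  cases b <;> cases c <;> decide

theorem esCost_loner (b c : Bool) :
    esCost 0 0 power (profile b c) loner = if b = c then 3 / 2 else 1 := by
  cases b <;> cases c
  all_goals first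
    | rw [esCost_eq_of_children_eq _ _ _ _ _ (M := {loner, follower}) (by decide)]
    | rw [esCost_eq_of_children_eq _ _ _ _ _ (M := {loner}) (by decide)]
  all_goals
    simp only [sup'_singleton, card_pair loner_ne_follower, card_singleton]
    norm_num [power, loner, follower, show (4 : Fin 5) ≠ 3 by decide]

theorem esCost_follower (b c : Bool) :
    esCost 0 0 power (profile b c) follower = if b = c then 3 / 2 else 3 := by
  cases b <;> cases c
  all_goals first
    | rw [esCost_eq_of_children_eq _ _ _ _ _ (M := {loner, follower}) (by decide)]
    | rw [esCost_eq_of_children_eq _ _ _ _ _ (M := {follower}) (by decide)]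
  all_goals
    simp only [sup'_singleton, card_pair loner_ne_follower, card_singleton]
    norm_num [power, loner, follower, show (4 : Fin 5) ≠ 3 by decide]

theorem isImprovingMove_loner (b : Bool) :
    IsImprovingMove 0 0 power (profile b b) (profile (!b) b) loner :=
  ⟨by revert b; decide, by norm_num [esCost_loner]⟩

theorem isImprovingMove_follower (b : Bool) :
    IsImprovingMove 0 0 power (profile b (!b)) (profile b b) follower :=
  ⟨by revert b; decide, by norm_num [esCost_follower]⟩

theorem exists_isImprovingMove (b c : Bool) :
    ∃ b' c' w, IsImprovingMove 0 0 power (profile b c) (profile b' c') w := by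
  cases b <;> cases c
  exacts [⟨_, _, _, isImprovingMove_loner false⟩, ⟨_, _, _, isImprovingMove_follower false⟩,
    ⟨_, _, _, isImprovingMove_follower true⟩, ⟨_, _, _, isImprovingMove_loner true⟩]

end CyclingExample

theorem exists_seq_rel_of_forall_exists_rel {α : Type*} {s : Set α} {r : α → α → Prop}
    (h : ∀ x ∈ s, ∃ y ∈ s, r x y) {a : α} (ha : a ∈ s) :
    ∃ f : ℕ → α, (∀ k, f k ∈ s) ∧ ∀ k, r (f k) (f (k + 1)) := by
  choose next next_mem next_rel using h
  let step : s → s := fun x => ⟨next x x.2, next_mem x x.2⟩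
  refine ⟨fun k => (step^[k] ⟨a, ha⟩).1, fun k => (step^[k] ⟨a, ha⟩).2, fun k => ?_⟩
  simp only [Function.iterate_succ_apply']
  exact next_rel _ _

open CyclingExample in
/-- Under the equal-share cost, best-response dynamics can cycle: in some
finite instance two distinct players `i` and `v` alternately perform strictly
improving unilateral deviations along a cycle of profiles
`a1 →ᵢ a2 →ᵥ a3 →ᵢ a4 →ᵥ a1`; hence there is an infinite sequence of strict
improvement steps, i.e. the dynamics never terminates. -/
theorem es_brd_can_cycle :
    ∃ (n : ℕ) (S : Fin n) (pc : Fin n → ℝ) (p : Fin n → Fin n → ℝ),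
      (∀ j, 0 ≤ pc j) ∧ (∀ i j, 0 ≤ p i j) ∧
      ∃ (i v : {m : Fin n // m ≠ S}), i ≠ v ∧
      ∃ a1 a2 a3 a4 : {m : Fin n // m ≠ S} → Fin n,
        (∀ m, a1 m ≠ m.1) ∧ (∀ m, a2 m ≠ m.1) ∧
        (∀ m, a3 m ≠ m.1) ∧ (∀ m, a4 m ≠ m.1) ∧
        (∀ m, m ≠ i → a2 m = a1 m) ∧ esCost S pc p a2 i < esCost S pc p a1 i ∧
        (∀ m, m ≠ v → a3 m = a2 m) ∧ esCost S pc p a3 v < esCost S pc p a2 v ∧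
        (∀ m, m ≠ i → a4 m = a3 m) ∧ esCost S pc p a4 i < esCost S pc p a3 i ∧
        (∀ m, m ≠ v → a1 m = a4 m) ∧ esCost S pc p a1 v < esCost S pc p a4 v ∧
        ∃ f : ℕ → ({m : Fin n // m ≠ S} → Fin n),
          (∀ k m, f k m ≠ m.1) ∧
          ∀ k, ∃ w, (∀ m, m ≠ w → f (k + 1) m = f k m) ∧
            esCost S pc p (f (k + 1)) w < esCost S pc p (f k) w := by
  obtain ⟨f, hf_mem, hf_move⟩ := exists_seq_rel_of_forall_exists_rel
    (s := Set.range fun bc : Bool × Bool => profile bc.1 bc.2)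
    (r := fun a b => ∃ w, IsImprovingMove 0 0 power a b w)
    (by
      rintro _ ⟨⟨b, c⟩, rfl⟩
      obtain ⟨b', c', w, hw⟩ := exists_isImprovingMove b c
      exact ⟨_, ⟨(b', c'), rfl⟩, w, hw⟩)
    ⟨(true, true), rfl⟩
  refine ⟨5, 0, 0, power, fun _ => le_rfl, power_nonneg, loner, follower, loner_ne_follower,
    profile true true, profile false true, profile false false, profile true false,
    profile_ne_self _ _, profile_ne_self _ _, profile_ne_self _ _, profile_ne_self _ _,
    (isImprovingMove_loner true).1, (isImprovingMove_loner true).2,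
    (isImprovingMove_follower false).1, (isImprovingMove_follower false).2,
    (isImprovingMove_loner false).1, (isImprovingMove_loner false).2,
    (isImprovingMove_follower true).1, (isImprovingMove_follower true).2,
    f, fun k => ?_, hf_move⟩
  obtain ⟨⟨b, c⟩, hbc⟩ := hf_mem k
  exact hbc ▸ profile_ne_self b c
end
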